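/- (Projected OGD regret bound) Let K ⊆ ℝ^d be a closed convex set of diameter at most D, and let f₁,…,f_T: K → ℝ be convex differentiable functions with ‖∇f_t(x)‖ ≤ G for all t and x ∈ K. Let θ₁ ∈ K and θ_{t+1} = Π_K(θ_t − η∇f_t(θ_t)) where Π_K is the Euclidean projection onto K and η > 0 is a fixed step size. Then for every θ ∈ K, Σ_{t=1}^T f_t(θ_t) − Σ_{t=1}^T f_t(θ) ≤ D²/(2η) + ηTG². -/

import Mathlib

/-!
Convexity bounds the instantaneous regret `f_t(θ_t) - f_t(θ*)` by `⟪∇f_t(θ_t), θ_t - θ*⟫`.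
Projecting onto the convex set `C` does not increase the distance to `θ* ∈ C`, so expanding
`‖θ_t - η ∇f_t(θ_t) - θ*‖²` bounds this inner product by
`(‖θ_t - θ*‖² - ‖θ_{t+1} - θ*‖²) / (2η) + η G² / 2`. Summing over `t` telescopes, and the
first distance is at most `D`.
-/

open scoped RealInnerProductSpace

section

variable {E : Type*} [NormedAddCommGroup E] [InnerProductSpace ℝ E]

theorem ConvexOn.sub_le_inner_of_hasGradientAt [CompleteSpace E] {C : Set E} {f : E → ℝ}
    {g x y : E} (hf : ConvexOn ℝ C f) (hx : x ∈ C) (hy : y ∈ C) (hg : HasGradientAt f g x) :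
    f x - f y ≤ ⟪g, x - y⟫ := by
  set ℓ := AffineMap.lineMap (k := ℝ) x y
  have hline : ConvexOn ℝ (ℓ ⁻¹' C) (f ∘ ℓ) := hf.comp_affineMap ℓ
  have hderiv : HasDerivAt (f ∘ ℓ) ⟪g, y - x⟫ 0 := by
    have hℓ : HasDerivAt ℓ (y - x) 0 := AffineMap.hasDerivAt_lineMap
    have hf' : HasFDerivAt f (InnerProductSpace.toDual ℝ E g) (ℓ 0) := by
      simpa [ℓ] using hg.hasFDerivAt
    simpa [InnerProductSpace.toDual_apply_apply] using hf'.comp_hasDerivAt (0 : ℝ) hℓ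
  have hslope := hline.le_slope_of_hasDerivAt (x := 0) (y := 1) (by simpa [ℓ])
    (by simpa [ℓ]) zero_lt_one hderiv
  rw [← neg_sub y x, inner_neg_right]
  simp only [slope_def_field, Function.comp_apply, AffineMap.lineMap_apply_one,
    AffineMap.lineMap_apply_zero, sub_zero, div_one, ℓ] at hslope
  linarith

theorem Convex.norm_sub_le_of_isMinOn {C : Set E} (hC : Convex ℝ C) {z p x : E} (hp : p ∈ C)
    (hmin : IsMinOn (‖· - z‖) C p) (hx : x ∈ C) : ‖p - x‖ ≤ ‖z - x‖ := by
  have hinf : ‖z - p‖ = ⨅ w : C, ‖z - w‖ := by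
    simp_rw [norm_sub_rev z]
    exact (hmin.iInf_eq hp).symm
  have hobtuse : ⟪z - p, x - p⟫ ≤ 0 := (norm_eq_iInf_iff_real_inner_le_zero hC hp).mp hinf x hx
  have hexpand : ‖z - x‖ ^ 2 = ‖z - p‖ ^ 2 - 2 * ⟪z - p, x - p⟫ + ‖p - x‖ ^ 2 := by
    rw [norm_sub_rev p x, ← norm_sub_sq_real, sub_sub_sub_cancel_right]
  have hsq : ‖p - x‖ ^ 2 ≤ ‖z - x‖ ^ 2 := by nlinarith [sq_nonneg ‖z - p‖]
  exact pow_le_pow_iff_left₀ (norm_nonneg _) (norm_nonneg _) two_ne_zero |>.mp hsq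

theorem inner_le_of_norm_sub_le_norm_sub_smul_sub {x u p g : E} {η : ℝ} (hη : 0 < η)
    (hp : ‖p - u‖ ≤ ‖x - η • g - u‖) :
    ⟪g, x - u⟫ ≤ (‖x - u‖ ^ 2 - ‖p - u‖ ^ 2) / (2 * η) + η / 2 * ‖g‖ ^ 2 := by
  have hexpand : ‖x - η • g - u‖ ^ 2 = ‖x - u‖ ^ 2 - 2 * η * ⟪g, x - u⟫ + η ^ 2 * ‖g‖ ^ 2 := by
    rw [sub_right_comm, norm_sub_sq_real, real_inner_smul_right, real_inner_comm, norm_smul,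
      Real.norm_of_nonneg hη.le]
    ring
  have hsq : ‖p - u‖ ^ 2 ≤ ‖x - η • g - u‖ ^ 2 := pow_le_pow_left₀ (norm_nonneg _) hp 2
  rw [div_add' _ _ _ (by positivity), le_div_iff₀ (by positivity)]
  nlinarith

theorem ConvexOn.sub_le_of_projected_step [CompleteSpace E] {C : Set E} {f : E → ℝ}
    {g x u p : E} {η G : ℝ} (hf : ConvexOn ℝ C f) (hx : x ∈ C) (hu : u ∈ C)
    (hg : HasGradientAt f g x) (hG : ‖g‖ ≤ G) (hη : 0 < η) (hp : ‖p - u‖ ≤ ‖x - η • g - u‖) :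
    f x - f u ≤ (‖x - u‖ ^ 2 - ‖p - u‖ ^ 2) / (2 * η) + η / 2 * G ^ 2 := by
  have hGsq : ‖g‖ ^ 2 ≤ G ^ 2 := pow_le_pow_left₀ (norm_nonneg g) hG 2
  calc f x - f u ≤ ⟪g, x - u⟫ := hf.sub_le_inner_of_hasGradientAt hx hu hg
    _ ≤ _ := inner_le_of_norm_sub_le_norm_sub_smul_sub hη hp
    _ ≤ _ := by gcongr

end

theorem Fin.sum_le_of_le_sub_succ_add {T : ℕ} {a : Fin T → ℝ} {v : ℕ → ℝ} {c : ℝ}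
    (h : ∀ t : Fin T, a t ≤ v t - v (t + 1) + c) : ∑ t, a t ≤ v 0 - v T + T * c := by
  calc ∑ t, a t ≤ ∑ t : Fin T, (v t - v (t + 1) + c) := Finset.sum_le_sum fun t _ => h t
    _ = v 0 - v T + T * c := by
      rw [Finset.sum_add_distrib, Fin.sum_univ_eq_sum_range (fun i => v i - v (i + 1)),
        Finset.sum_range_sub', Finset.sum_const, Finset.card_univ, Fintype.card_fin, nsmul_eq_mul]

theorem projected_ogd_regret_general {d : ℕ}
    (C : Set (EuclideanSpace ℝ (Fin d)))
    (hC_conv : Convex ℝ C)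
    (D : ℝ) (hD : ∀ x ∈ C, ∀ y ∈ C, ‖x - y‖ ≤ D)
    (T : ℕ) (f : Fin T → EuclideanSpace ℝ (Fin d) → ℝ)
    (f' : Fin T → EuclideanSpace ℝ (Fin d) → EuclideanSpace ℝ (Fin d))
    (hconv : ∀ t, ConvexOn ℝ C (f t))
    (hgrad : ∀ t x, x ∈ C → HasGradientAt (f t) (f' t x) x)
    (G : ℝ) (hG : ∀ t x, x ∈ C → ‖f' t x‖ ≤ G)
    (proj : EuclideanSpace ℝ (Fin d) → EuclideanSpace ℝ (Fin d))
    (hproj_mem : ∀ z, proj z ∈ C)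
    (hproj : ∀ z, ∀ x ∈ C, ‖proj z - z‖ ≤ ‖x - z‖)
    (η : ℝ) (hη : 0 < η)
    (θ : ℕ → EuclideanSpace ℝ (Fin d)) (hθ0 : θ 0 ∈ C)
    (hθ : ∀ t : Fin T, θ (t + 1) = proj (θ t - η • f' t (θ t))) :
    ∀ θstar ∈ C,
      ∑ t : Fin T, f t (θ t) - ∑ t : Fin T, f t θstar
        ≤ D ^ 2 / (2 * η) + η * T * G ^ 2 := by
  intro θstar hstar
  have hmem (n : ℕ) (hn : n ≤ T) : θ n ∈ C := by
    cases n with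
    | zero => exact hθ0
    | succ k => exact (hθ ⟨k, hn⟩).symm ▸ hproj_mem _
  have hstep (t : Fin T) : f t (θ t) - f t θstar ≤
      (‖θ t - θstar‖ ^ 2 - ‖θ (t + 1) - θstar‖ ^ 2) / (2 * η) + η / 2 * G ^ 2 :=
    (hconv t).sub_le_of_projected_step (hmem t t.2.le) hstar
      (hgrad t _ (hmem t t.2.le)) (hG t _ (hmem t t.2.le)) hη
      (hθ t ▸ hC_conv.norm_sub_le_of_isMinOn (hproj_mem _) (hproj _) hstar)
  have hregret := Fin.sum_le_of_le_sub_succ_add (a := fun t => f t (θ t) - f t θstar)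
    (v := fun n => ‖θ n - θstar‖ ^ 2 / (2 * η)) fun t => by simpa only [sub_div] using hstep t
  have hinit : ‖θ 0 - θstar‖ ^ 2 / (2 * η) ≤ D ^ 2 / (2 * η) := by
    gcongr
    exact hD _ hθ0 _ hstar
  have hfinal : 0 ≤ ‖θ T - θstar‖ ^ 2 / (2 * η) := by positivity
  have hslack : (T : ℝ) * (η / 2 * G ^ 2) ≤ η * T * G ^ 2 := by
    nlinarith [mul_nonneg (mul_nonneg hη.le (Nat.cast_nonneg T)) (sq_nonneg G)]
  rw [← Finset.sum_sub_distrib]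
  linarith

/-- **Projected OGD regret bound.** Let `C ⊆ ℝ^d` be a closed convex set of diameter at most
`D`, `f t` convex differentiable with gradients `f' t` bounded by `G` on `C`, `proj` the
Euclidean projection onto `C`, and `θ` the projected online gradient descent iterates with
fixed step `η > 0`. Then for every comparator `θ* ∈ C`,
`Σ_t f_t(θ_t) − Σ_t f_t(θ*) ≤ D²/(2η) + ηTG²`. -/
theorem projected_ogd_regret {d : ℕ}
    (C : Set (EuclideanSpace ℝ (Fin d)))
    (hC_closed : IsClosed C) (hC_conv : Convex ℝ C) (hC_ne : C.Nonempty)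
    (D : ℝ) (hD : ∀ x ∈ C, ∀ y ∈ C, ‖x - y‖ ≤ D)
    (T : ℕ) (f : Fin T → EuclideanSpace ℝ (Fin d) → ℝ)
    (f' : Fin T → EuclideanSpace ℝ (Fin d) → EuclideanSpace ℝ (Fin d))
    (hconv : ∀ t, ConvexOn ℝ C (f t))
    (hgrad : ∀ t x, x ∈ C → HasGradientAt (f t) (f' t x) x)
    (G : ℝ) (hG : ∀ t x, x ∈ C → ‖f' t x‖ ≤ G)
    (proj : EuclideanSpace ℝ (Fin d) → EuclideanSpace ℝ (Fin d))
    (hproj_mem : ∀ z, proj z ∈ C)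
    (hproj : ∀ z, ∀ x ∈ C, ‖proj z - z‖ ≤ ‖x - z‖)
    (η : ℝ) (hη : 0 < η)
    (θ : ℕ → EuclideanSpace ℝ (Fin d)) (hθ0 : θ 0 ∈ C)
    (hθ : ∀ t : Fin T, θ (t + 1) = proj (θ t - η • f' t (θ t))) :
    ∀ θstar ∈ C,
      ∑ t : Fin T, f t (θ t) - ∑ t : Fin T, f t θstar
        ≤ D ^ 2 / (2 * η) + η * T * G ^ 2 :=
  projected_ogd_regret_general C hC_conv D hD T f f' hconv hgrad G hG proj hproj_mem hproj η hη θ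
    hθ0 hθ
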